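/- Let W be the generalized Witt algebra and r ∈ W⊗W such that a·r ∈ Im(1−τ) for all a ∈ W, where τ is the twist map on W⊗W. Then r ∈ Im(1−τ); i.e., r is antisymmetric modulo the symmetric part forced by the action: the preimage of Im(1−τ) under all adjoint actions is Im(1−τ) itself. -/

import Mathlib

/-!
The twist `τ` is an involution commuting with the action, so `a · r ∈ Im(1 - τ) ⊆ ker(1 + τ)`
makes `r + τ r` an invariant of `W ⊗ W`. Invariants vanish: let `s` be one, fix a coordinate
`((u, k), (v, l))` and let `g i` be the `((u, i), (v, l))`-coordinate of `s`. For `z ∈ A` such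
that `u + z` avoids the finitely many first degrees occurring in `s`, the
`((u + z, k), (v, l))`-coordinate of `x^z ∂_k · s = 0` gets no contribution from the second
factor and reads `g ⬝ z = u_k g_k`. Comparing `z` with `z + b` (`A` is infinite) gives
`g ⬝ b = 0` for all `b ∈ A`, so `g = 0` because `A` spans `F^n`. Hence `τ r = -r`, and
`r = (1 - τ)(r / 2)`.
-/

open TensorProduct

theorem TensorProduct.comm_lie {R L M N : Type*} [CommRing R] [LieRing L] [LieAlgebra R L]
    [AddCommGroup M] [Module R M] [LieRingModule L M] [LieModule R L M]
    [AddCommGroup N] [Module R N] [LieRingModule L N] [LieModule R L N] (x : L) (m : M ⊗[R] N) :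
    TensorProduct.comm R M N ⁅x, m⁆ = ⁅x, TensorProduct.comm R M N m⁆ := by
  induction m using TensorProduct.induction_on with
  | zero => simp
  | tmul a b =>
    simp only [LieModule.lie_tmul_right, map_add, TensorProduct.comm_tmul]
    abel
  | add a b ha hb => rw [lie_add, map_add, ha, hb, map_add, lie_add]

theorem LinearMap.add_apply_eq_zero_of_mem_range_id_sub {R M : Type*} [Ring R] [AddCommGroup M]
    [Module R M] {σ : M →ₗ[R] M} (hσ : Function.Involutive σ) {m : M}
    (hm : m ∈ LinearMap.range (LinearMap.id - σ)) : m + σ m = 0 := by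
  obtain ⟨w, rfl⟩ := hm
  simp [hσ _]

theorem LinearMap.mem_range_id_sub_of_apply_eq_neg {K M : Type*} [DivisionRing K] [NeZero (2 : K)]
    [AddCommGroup M] [Module K M] {σ : M →ₗ[K] M} {m : M} (hm : σ m = -m) :
    m ∈ LinearMap.range (LinearMap.id - σ) :=
  ⟨(2 : K)⁻¹ • m, by
    rw [LinearMap.sub_apply, LinearMap.id_apply, map_smul, hm, smul_neg, sub_neg_eq_add,
      ← two_smul K, smul_smul, mul_inv_cancel₀ two_ne_zero, one_smul]⟩

theorem eq_zero_of_forall_dotProduct_eq_zero_of_span_eq_top {R ι : Type*} [CommRing R]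
    [Fintype ι] {S : Set (ι → R)} (hS : Submodule.span R S = ⊤) {g : ι → R}
    (hg : ∀ w ∈ S, g ⬝ᵥ w = 0) : g = 0 := by
  refine dotProduct_eq_zero g fun w => ?_
  have hw : w ∈ Submodule.span R S := hS ▸ Submodule.mem_top
  induction hw using Submodule.span_induction with
  | mem w hw => exact hg w hw
  | zero => exact dotProduct_zero g
  | add w w' _ _ hw hw' => rw [dotProduct_add, hw, hw', add_zero]
  | smul c w _ hw => rw [dotProduct_smul, hw, smul_zero]

theorem AddSubgroup.infinite_of_span_eq_top {K V : Type*} [DivisionRing K] [CharZero K]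
    [AddCommGroup V] [Module K V] [Nontrivial V] {A : AddSubgroup V}
    (hA : Submodule.span K (A : Set V) = ⊤) : Infinite A := by
  obtain ⟨a, ha, ha0⟩ : ∃ a ∈ A, a ≠ 0 := by
    by_contra! h
    exact top_ne_bot (hA.symm.trans (Submodule.span_eq_bot.2 h))
  refine Infinite.of_injective (fun m : ℕ => m • (⟨a, ha⟩ : A)) fun p q hpq => ?_
  refine Nat.cast_injective (R := K) (smul_left_injective K ha0 ?_)
  simpa [Nat.cast_smul_eq_nsmul] using congrArg Subtype.val hpq

namespace WittAlgebra

variable {F : Type*} [Field F] {n : ℕ} {A : AddSubgroup (Fin n → F)}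
  {L : Type*} [LieRing L] [LieAlgebra F L]
  {t : A → (Fin n → F) →ₗ[F] L} {ℬ : Module.Basis (A × Fin n) F L}

def HasWittBracket (t : A → (Fin n → F) →ₗ[F] L) : Prop :=
  ∀ (x y : A) (d d' : Fin n → F),
    ⁅t x d, t y d'⁆ = t (x + y) ((d ⬝ᵥ ↑y) • d' - (d' ⬝ᵥ ↑x) • d)

theorem apply_eq_sum_basis (hℬ : ∀ (x : A) (i : Fin n), ℬ (x, i) = t x (Pi.single i 1))
    (w : A) (v : Fin n → F) : t w v = ∑ i, v i • ℬ (w, i) := by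
  conv_lhs => rw [← Finset.univ_sum_single v, map_sum]
  refine Finset.sum_congr rfl fun i _ => ?_
  rw [hℬ, ← map_smul, ← Pi.single_smul', smul_eq_mul, mul_one]

theorem repr_apply_self (hℬ : ∀ (x : A) (i : Fin n), ℬ (x, i) = t x (Pi.single i 1))
    (x : A) (v : Fin n → F) (k : Fin n) : ℬ.repr (t x v) (x, k) = v k := by
  classical
  simp [apply_eq_sum_basis hℬ, Finsupp.single_apply]

theorem repr_apply_of_ne (hℬ : ∀ (x : A) (i : Fin n), ℬ (x, i) = t x (Pi.single i 1))
    {w x : A} (h : w ≠ x) (v : Fin n → F) (k : Fin n) : ℬ.repr (t w v) (x, k) = 0 := by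
  simp [apply_eq_sum_basis hℬ, h]

theorem repr_lie_apply (hℬ : ∀ (x : A) (i : Fin n), ℬ (x, i) = t x (Pi.single i 1))
    (hbr : HasWittBracket t) (z : A) (e : Fin n → F) (m : L) (x : A) (k : Fin n) :
    ℬ.repr ⁅t z e, m⁆ (x, k) =
      (e ⬝ᵥ ↑(x - z)) * ℬ.repr m (x - z, k) - ((fun i => ℬ.repr m (x - z, i)) ⬝ᵥ ↑z) * e k := by
  have hm : m ∈ Submodule.span F (Set.range ℬ) := ℬ.span_eq ▸ Submodule.mem_top
  induction hm using Submodule.span_induction with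
  | mem _ hb =>
    obtain ⟨⟨y, i⟩, rfl⟩ := hb
    rw [hℬ, hbr]
    by_cases hy : y = x - z
    · subst hy
      rw [add_sub_cancel, repr_apply_self hℬ]
      simp [repr_apply_self hℬ, dotProduct, Pi.single_apply]
    · have hzy : z + y ≠ x := fun h => hy (eq_sub_of_add_eq' h)
      simp [repr_apply_of_ne hℬ hzy, repr_apply_of_ne hℬ hy]
  | zero => simp [dotProduct]
  | add a b _ _ ha hb =>
    simp only [lie_add, map_add, Finsupp.add_apply, ha, hb, dotProduct, add_mul,
      Finset.sum_add_distrib]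
    ring
  | smul c a _ ha =>
    simp only [lie_smul, map_smul, Finsupp.smul_apply, smul_eq_mul, ha, dotProduct, mul_assoc,
      ← Finset.mul_sum]
    ring

theorem tensorProduct_repr_lie_apply
    (hℬ : ∀ (x : A) (i : Fin n), ℬ (x, i) = t x (Pi.single i 1)) (hbr : HasWittBracket t)
    (z : A) (e : Fin n → F) (s : L ⊗[F] L) (x y : A) (k l : Fin n) :
    (ℬ.tensorProduct ℬ).repr ⁅t z e, s⁆ ((x, k), (y, l)) =
      (e ⬝ᵥ ↑(x - z)) * (ℬ.tensorProduct ℬ).repr s ((x - z, k), (y, l))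
        - ((fun i => (ℬ.tensorProduct ℬ).repr s ((x - z, i), (y, l))) ⬝ᵥ ↑z) * e k
      + ((e ⬝ᵥ ↑(y - z)) * (ℬ.tensorProduct ℬ).repr s ((x, k), (y - z, l))
        - ((fun j => (ℬ.tensorProduct ℬ).repr s ((x, k), (y - z, j))) ⬝ᵥ ↑z) * e l) := by
  induction s using TensorProduct.induction_on with
  | zero => simp [dotProduct]
  | tmul a b =>
    simp only [LieModule.lie_tmul_right, map_add, Finsupp.add_apply,
      Module.Basis.tensorProduct_repr_tmul_apply, repr_lie_apply hℬ hbr, smul_eq_mul, dotProduct,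
      Finset.sum_mul, Finset.mul_sum, mul_sub, sub_mul]
    simp only [mul_comm, mul_left_comm]
  | add a b ha hb =>
    simp only [lie_add, map_add, Finsupp.add_apply, ha, hb, dotProduct, add_mul,
      Finset.sum_add_distrib]
    ring

theorem eq_zero_of_forall_lie_eq_zero [CharZero F]
    (hA : Submodule.span F (A : Set (Fin n → F)) = ⊤)
    (hℬ : ∀ (x : A) (i : Fin n), ℬ (x, i) = t x (Pi.single i 1))
    (hbr : HasWittBracket t) {s : L ⊗[F] L} (hs : ∀ a : L, ⁅a, s⁆ = 0) : s = 0 := by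
  classical
  set f := (ℬ.tensorProduct ℬ).repr s with hf
  suffices h : f = 0 from (ℬ.tensorProduct ℬ).repr.map_eq_zero_iff.1 h
  ext ⟨⟨u, k⟩, ⟨v, l⟩⟩
  have : Nonempty (Fin n) := ⟨k⟩
  have : Infinite A := AddSubgroup.infinite_of_span_eq_top hA
  set g : Fin n → F := fun i => f ((u, i), (v, l))
  set X : Finset A := f.support.image fun p => p.1.1
  have hgz : ∀ z : A, u + z ∉ X → g ⬝ᵥ ↑z = (u : Fin n → F) k * g k := by
    intro z hz
    have hrow : ∀ q, f ((u + z, k), q) = 0 := fun q => by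
      by_contra hq
      exact hz (Finset.mem_image.2 ⟨_, Finsupp.mem_support_iff.2 hq, rfl⟩)
    have h := tensorProduct_repr_lie_apply hℬ hbr z (Pi.single k 1) s (u + z) v k l
    rw [hs, add_sub_cancel_right, ← hf] at h
    simp only [map_zero, Finsupp.coe_zero, Pi.zero_apply, single_dotProduct, one_mul,
      Pi.single_eq_same, mul_one, AddSubgroupClass.coe_sub, dotProduct_sub, hrow, mul_zero,
      zero_dotProduct', zero_mul, sub_self, add_zero] at h
    exact (sub_eq_zero.1 h.symm).symm
  have hgA : ∀ b ∈ A, g ⬝ᵥ b = 0 := by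
    intro b hb
    obtain ⟨z, hz⟩ := Infinite.exists_notMem_finset
      (X.image (· - u) ∪ X.image (· - u - ⟨b, hb⟩))
    have hz₁ : u + z ∉ X := fun h =>
      hz (Finset.mem_union_left _ (Finset.mem_image.2 ⟨_, h, by abel⟩))
    have hz₂ : u + (z + ⟨b, hb⟩) ∉ X := fun h =>
      hz (Finset.mem_union_right _ (Finset.mem_image.2 ⟨_, h, by abel⟩))
    have := hgz (z + ⟨b, hb⟩) hz₂
    rw [AddSubgroup.coe_add, dotProduct_add, hgz z hz₁] at this
    simpa using this
  exact congrFun (eq_zero_of_forall_dotProduct_eq_zero_of_span_eq_top hA hgA) k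

end WittAlgebra

/-- For the generalized Witt algebra `W`, if `r ∈ W ⊗ W` satisfies
`a · r ∈ Im(1-τ)` for every `a ∈ W` (adjoint diagonal action, `τ` the twist map),
then `r ∈ Im(1-τ)`. -/
theorem witt_bialg_stmt15 {F : Type*} [Field F] [CharZero F] {n : ℕ}
    {A : AddSubgroup (Fin n → F)}
    (hA : Submodule.span F (A : Set (Fin n → F)) = ⊤)
    {L : Type*} [LieRing L] [LieAlgebra F L]
    (t : A → (Fin n → F) →ₗ[F] L)
    (ℬ : Module.Basis (A × Fin n) F L)
    (hℬ : ∀ (x : A) (i : Fin n), ℬ (x, i) = t x (Pi.single i 1))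
    (hbr : ∀ (x y : A) (d d' : Fin n → F),
      ⁅t x d, t y d'⁆ = t (x + y)
        ((∑ i, d i * (y : Fin n → F) i) • d' - (∑ i, d' i * (x : Fin n → F) i) • d))
    (r : L ⊗[F] L)
    (hr : ∀ a : L, ⁅a, r⁆ ∈ LinearMap.range
      (LinearMap.id - (TensorProduct.comm F L L).toLinearMap)) :
    r ∈ LinearMap.range (LinearMap.id - (TensorProduct.comm F L L).toLinearMap) := by
  have hτ : Function.Involutive (TensorProduct.comm F L L).toLinearMap :=
    TensorProduct.comm_comm F L L
  have hinv : ∀ a : L, ⁅a, r + TensorProduct.comm F L L r⁆ = 0 := fun a => by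
    rw [lie_add, ← TensorProduct.comm_lie]
    exact LinearMap.add_apply_eq_zero_of_mem_range_id_sub hτ (hr a)
  have hanti := WittAlgebra.eq_zero_of_forall_lie_eq_zero hA hℬ hbr hinv
  exact LinearMap.mem_range_id_sub_of_apply_eq_neg (eq_neg_of_add_eq_zero_right hanti)
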